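/- For any bipartition (ρ;σ) of n, one has ((ρ;σ)^C)^B = ((ρ;σ)^B)^C, and this common value is the special closure (ρ;σ)°, i.e. the minimum special bipartition dominating (ρ;σ). -/

import Mathlib

open Finset

/-- Partial sum of the first `k` terms of a sequence of naturals. -/
def psum (π : ℕ → ℕ) (k : ℕ) : ℕ := ∑ i ∈ Finset.range k, π i

/-- A composition of `n`: almost all terms zero, summing to `n`. -/
def IsComposition (n : ℕ) (π : ℕ → ℕ) : Prop :=
  ∃ N, (∀ i, N ≤ i → π i = 0) ∧ psum π N = n

/-- Dominance order: `l` dominates `π`. -/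
def Dominates (l π : ℕ → ℕ) : Prop := ∀ k, psum π k ≤ psum l k

/-- A partition: weakly decreasing sequence. -/
def IsPartition (π : ℕ → ℕ) : Prop := ∀ i, π (i + 1) ≤ π i

/-- A quasi-partition: `π i ≥ π (i+2)` for all `i`. -/
def IsQuasiPartition (π : ℕ → ℕ) : Prop := ∀ i, π (i + 2) ≤ π i

/-- Interleaving of two sequences: `(ρ₁, σ₁, ρ₂, σ₂, …)` (0-indexed). -/
def interleave (ρ σ : ℕ → ℕ) (i : ℕ) : ℕ :=
  if i % 2 = 0 then ρ (i / 2) else σ (i / 2)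

/-- A bipartition of `n`: a pair of partitions whose interleaving sums to `n`. -/
def IsBipartition (n : ℕ) (ρ σ : ℕ → ℕ) : Prop :=
  IsPartition ρ ∧ IsPartition σ ∧ IsComposition n (interleave ρ σ)

/-- Interleaved dominance order on bipartitions: `(ρ;σ) ≤ (μ;ν)`. -/
def BiLE (ρ σ μ ν : ℕ → ℕ) : Prop :=
  Dominates (interleave μ ν) (interleave ρ σ)

/-- The map `Φ^C` on sequences: replace a consecutive pair `2s < 2t`
by `s+t, s+t` (pointwise description; replacements never overlap for
quasi-partitions). -/
def phiC (π : ℕ → ℕ) : ℕ → ℕ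
  | 0 => if π 0 < π 1 then (π 0 + π 1) / 2 else π 0
  | (j + 1) =>
      if π (j + 1) < π (j + 2) then (π (j + 1) + π (j + 2)) / 2
      else if π j < π (j + 1) then (π j + π (j + 1)) / 2
      else π (j + 1)

/-- `Φ^C` of a bipartition: apply `phiC` to the doubled interleaving. -/
def PhiC (ρ σ : ℕ → ℕ) : ℕ → ℕ := phiC (fun i => 2 * interleave ρ σ i)

/-- Membership in `P^C_{2n}`: partition of `2n` with every odd part of even
multiplicity. -/
def IsPC (n : ℕ) (l : ℕ → ℕ) : Prop :=
  IsPartition l ∧ IsComposition (2 * n) l ∧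
    ∀ a : ℕ, Odd a → Even ({i | l i = a}.ncard)

/-- C-distinguished: `μ i ≥ ν i - 1` and `ν i ≥ μ (i+1) - 1`. -/
def QC (μ ν : ℕ → ℕ) : Prop :=
  ∀ i, ν i ≤ μ i + 1 ∧ μ (i + 1) ≤ ν i + 1

/-- B-distinguished: `μ i ≥ ν i - 2` and `ν i ≥ μ (i+1)`. -/
def QB (μ ν : ℕ → ℕ) : Prop :=
  ∀ i, ν i ≤ μ i + 2 ∧ μ (i + 1) ≤ ν i

/-- Special: `μ i ≥ ν i - 1` and `ν i ≥ μ (i+1)`. -/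
def QS (μ ν : ℕ → ℕ) : Prop :=
  ∀ i, ν i ≤ μ i + 1 ∧ μ (i + 1) ≤ ν i

/-- The condition defining `Q_n^{B,2}`: `μ i ≥ ν i - 2`. -/
def QB2 (μ ν : ℕ → ℕ) : Prop := ∀ i, ν i ≤ μ i + 2

/-- For an antitone sequence, the starting index of the run of equal values
containing index `i`. -/
noncomputable def runStart (l : ℕ → ℕ) (i : ℕ) : ℕ := {j | l i < l j}.ncard

/-- The map `Φ̂^C`, pointwise: halve even parts; replace an (even-length)
maximal run of an odd part `2k+1` with `k, k+1, k, k+1, …`. -/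
noncomputable def hphiC (l : ℕ → ℕ) (i : ℕ) : ℕ :=
  if Even (l i) then l i / 2
  else if Even (i - runStart l i) then l i / 2 else l i / 2 + 1

/-- Partial sums of an integer sequence. -/
def zsum (π : ℕ → ℤ) (k : ℕ) : ℤ := ∑ i ∈ Finset.range k, π i

/-- Dominance order on integer sequences. -/
def ZDominates (l π : ℕ → ℤ) : Prop := ∀ k, zsum π k ≤ zsum l k

/-- The interleaved integer sequence `(2ρ₁+1, 2σ₁−1, 2ρ₂+1, 2σ₂−1, …)`. -/
def interB (ρ σ : ℕ → ℕ) (i : ℕ) : ℤ :=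
  if i % 2 = 0 then 2 * (ρ (i / 2) : ℤ) + 1 else 2 * (σ (i / 2) : ℤ) - 1

/-- The map `Φ^B` on integer sequences: replace a consecutive pair `s < t`
by `(s+t)/2, (s+t)/2` (pointwise description). -/
def phiB (π : ℕ → ℤ) : ℕ → ℤ
  | 0 => if π 0 < π 1 then (π 0 + π 1) / 2 else π 0
  | (j + 1) =>
      if π (j + 1) < π (j + 2) then (π (j + 1) + π (j + 2)) / 2
      else if π j < π (j + 1) then (π j + π (j + 1)) / 2
      else π (j + 1)

/-- `Φ^B` of a bipartition. -/
def PhiB (ρ σ : ℕ → ℕ) : ℕ → ℤ := phiB (interB ρ σ)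

/-- Membership in `P^B_{2n+1}` for an integer sequence: nonnegative, weakly
decreasing, summing to `2n+1`, with every (positive) even part of even
multiplicity. -/
def IsPB (n : ℕ) (l : ℕ → ℤ) : Prop :=
  (∀ i, 0 ≤ l i) ∧ (∀ i, l (i + 1) ≤ l i) ∧
  (∃ N, (∀ i, N ≤ i → l i = 0) ∧ zsum l N = 2 * n + 1) ∧
  ∀ a : ℤ, 0 < a → Even a → Even ({i | l i = a}.ncard)

/-- Membership in `P^B_{2n+1}` for a natural-number partition. -/
def IsPBN (n : ℕ) (l : ℕ → ℕ) : Prop :=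
  IsPartition l ∧ IsComposition (2 * n + 1) l ∧
    ∀ a : ℕ, 0 < a → Even a → Even ({i | l i = a}.ncard)

/-- The map `Φ̂^B`, pointwise (0-indexed, so the paper's index `i` is `j+1`):
an odd part `λ_i` becomes `(λ_i + (−1)^i)/2`; a maximal run of an even part
`2k` starting at (0-indexed) position `s` becomes `k, k, …` if `s` is odd
(paper's `i` even) and `k−1, k+1, k−1, k+1, …` if `s` is even (paper's `i`
odd). -/
noncomputable def hphiB (l : ℕ → ℕ) (j : ℕ) : ℕ :=
  if Odd (l j) then (if Even j then (l j - 1) / 2 else (l j + 1) / 2)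
  else
    if Odd (runStart l j) then l j / 2
    else if Even (j - runStart l j) then l j / 2 - 1 else l j / 2 + 1

/-- First component of the special closure `(ρ;σ)°`. -/
def scRho (ρ σ : ℕ → ℕ) : ℕ → ℕ
  | 0 => if ρ 0 + 1 < σ 0 then (ρ 0 + σ 0) / 2 else ρ 0
  | (i + 1) =>
      if ρ (i + 1) + 1 < σ (i + 1) then (ρ (i + 1) + σ (i + 1)) / 2
      else if σ i < ρ (i + 1) then (σ i + ρ (i + 1)) / 2
      else ρ (i + 1)

/-- Second component of the special closure `(ρ;σ)°`. -/
def scSigma (ρ σ : ℕ → ℕ) (i : ℕ) : ℕ :=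
  if ρ i + 1 < σ i then (ρ i + σ i + 1) / 2
  else if σ i < ρ (i + 1) then (σ i + ρ (i + 1) + 1) / 2
  else σ i

/-- First component of the closure `(ρ;σ)~` into `Q_n^{B,2}`. -/
def tRho (ρ σ : ℕ → ℕ) (i : ℕ) : ℕ :=
  if ρ i + 2 < σ i then (ρ i + σ i + 1) / 2 - 1 else ρ i

/-- Second component of the closure `(ρ;σ)~` into `Q_n^{B,2}`. -/
def tSigma (ρ σ : ℕ → ℕ) (i : ℕ) : ℕ :=
  if ρ i + 2 < σ i then (ρ i + σ i) / 2 + 1 else σ i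

/-- First component of the closure `(ρ;σ)^B` into `Q_n^B`. -/
def bRho (ρ σ : ℕ → ℕ) : ℕ → ℕ
  | 0 => if ρ 0 + 2 < σ 0 then (ρ 0 + σ 0 + 1) / 2 - 1 else ρ 0
  | (i + 1) =>
      if ρ (i + 1) + 2 < σ (i + 1) then (ρ (i + 1) + σ (i + 1) + 1) / 2 - 1
      else if σ i < ρ (i + 1) then (σ i + ρ (i + 1)) / 2
      else ρ (i + 1)

/-- Second component of the closure `(ρ;σ)^B` into `Q_n^B`. -/
def bSigma (ρ σ : ℕ → ℕ) (i : ℕ) : ℕ :=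
  if ρ i + 2 < σ i then (ρ i + σ i) / 2 + 1
  else if σ i < ρ (i + 1) then (σ i + ρ (i + 1) + 1) / 2
  else σ i

/-- First component of the closure `(ρ;σ)^C` into `Q_n^C`. -/
def cRho (ρ σ : ℕ → ℕ) : ℕ → ℕ
  | 0 => if ρ 0 + 1 < σ 0 then (ρ 0 + σ 0) / 2 else ρ 0
  | (i + 1) =>
      if ρ (i + 1) + 1 < σ (i + 1) then (ρ (i + 1) + σ (i + 1)) / 2
      else if σ i + 1 < ρ (i + 1) then (σ i + ρ (i + 1) + 1) / 2
      else ρ (i + 1)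

/-- Second component of the closure `(ρ;σ)^C` into `Q_n^C`. -/
def cSigma (ρ σ : ℕ → ℕ) (i : ℕ) : ℕ :=
  if ρ i + 1 < σ i then (ρ i + σ i + 1) / 2
  else if σ i + 1 < ρ (i + 1) then (σ i + ρ (i + 1)) / 2
  else σ i

/-! The composites `((ρ;σ)^C)^B`, `((ρ;σ)^B)^C` and the special closure `(ρ;σ)°` all act by the
same local rule on the interleaved sequence `(ρ₀, σ₀, ρ₁, σ₁, …)`: an adjacent pair that is too
far out of order is replaced by its floor/ceiling average. For partitions the pairs that get
replaced are disjoint, so the two identities hold pointwise. Averaging a pair moves mass forward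
across the boundary between its two entries, so the only partial sum that changes is the one
up to that boundary, and it grows by the mass moved. For a special `(τ;υ)` the partial sums `T`
are almost concave, `T (m - 1) + T (m + 1) ≤ 2 T m + 1` with no `+ 1` for even `m`, and this caps
the raised partial sum by that of any special bipartition dominating `(ρ;σ)`. -/

theorem forall_of_zero_of_odd_of_even {p : ℕ → Prop} (h0 : p 0) (hodd : ∀ k, p (2 * k + 1))
    (heven : ∀ k, p (2 * k + 2)) : ∀ m, p m
  | 0 => h0
  | m + 1 => by
    obtain ⟨k, rfl | rfl⟩ := Nat.even_or_odd' m
    · exact hodd k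
    · exact heven k

theorem psum_succ (π : ℕ → ℕ) (k : ℕ) : psum π (k + 1) = psum π k + π k :=
  sum_range_succ π k

theorem psum_eq_of_forall_le_eq_zero {π : ℕ → ℕ} {N M : ℕ} (hπ : ∀ i, N ≤ i → π i = 0)
    (hNM : N ≤ M) : psum π M = psum π N := by
  rw [psum, ← sum_range_add_sum_Ico _ hNM, sum_eq_zero fun i hi => hπ i (mem_Ico.1 hi).1,
    add_zero, psum]

@[simp]
theorem interleave_two_mul (ρ σ : ℕ → ℕ) (k : ℕ) : interleave ρ σ (2 * k) = ρ k := by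
  simp [interleave]

@[simp]
theorem interleave_two_mul_add_one (ρ σ : ℕ → ℕ) (k : ℕ) : interleave ρ σ (2 * k + 1) = σ k := by
  simp [interleave, Nat.add_mod, Nat.add_div]

theorem psum_interleave_two_mul_add_one (ρ σ : ℕ → ℕ) (k : ℕ) :
    psum (interleave ρ σ) (2 * k + 1) = psum (interleave ρ σ) (2 * k) + ρ k := by
  rw [psum_succ, interleave_two_mul]

theorem psum_interleave_two_mul_add_two (ρ σ : ℕ → ℕ) (k : ℕ) :
    psum (interleave ρ σ) (2 * k + 2) = psum (interleave ρ σ) (2 * k + 1) + σ k := by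
  rw [psum_succ, interleave_two_mul_add_one]

section
variable {ρ σ : ℕ → ℕ}

theorem bRho_cRho_cSigma (hρ : IsPartition ρ) (hσ : IsPartition σ) :
    bRho (cRho ρ σ) (cSigma ρ σ) = scRho ρ σ := by
  funext i
  cases i with
  | zero =>
    have := hρ 0
    simp only [bRho, cRho, cSigma, scRho]; split_ifs <;> omega
  | succ i =>
    have := hρ i; have := hρ (i + 1); have := hσ i
    simp only [bRho, cRho, cSigma, scRho]; split_ifs <;> omega

theorem bSigma_cRho_cSigma (hρ : IsPartition ρ) (hσ : IsPartition σ) :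
    bSigma (cRho ρ σ) (cSigma ρ σ) = scSigma ρ σ := by
  funext i
  cases i with
  | zero =>
    have := hρ 0; have := hσ 0
    simp only [bSigma, cRho, cSigma, scSigma]; split_ifs <;> omega
  | succ i =>
    have := hρ (i + 1); have := hσ i; have := hσ (i + 1)
    simp only [bSigma, cRho, cSigma, scSigma]; split_ifs <;> omega

theorem cRho_bRho_bSigma (hρ : IsPartition ρ) (hσ : IsPartition σ) :
    cRho (bRho ρ σ) (bSigma ρ σ) = scRho ρ σ := by
  funext i
  cases i with
  | zero =>
    have := hρ 0
    simp only [bRho, bSigma, cRho, scRho]; split_ifs <;> omega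
  | succ i =>
    have := hρ i; have := hρ (i + 1); have := hσ i
    simp only [bRho, bSigma, cRho, scRho]; split_ifs <;> omega

theorem cSigma_bRho_bSigma (hρ : IsPartition ρ) (hσ : IsPartition σ) :
    cSigma (bRho ρ σ) (bSigma ρ σ) = scSigma ρ σ := by
  funext i
  cases i with
  | zero =>
    have := hρ 0; have := hσ 0
    simp only [bRho, bSigma, cSigma, scSigma]; split_ifs <;> omega
  | succ i =>
    have := hρ (i + 1); have := hσ i; have := hσ (i + 1)
    simp only [bRho, bSigma, cSigma, scSigma]; split_ifs <;> omega

theorem isPartition_scRho (hρ : IsPartition ρ) (hσ : IsPartition σ) :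
    IsPartition (scRho ρ σ) := by
  intro i
  cases i with
  | zero =>
    have := hρ 0; have := hσ 0
    simp only [scRho]; split_ifs <;> omega
  | succ i =>
    have := hρ (i + 1); have := hσ i; have := hσ (i + 1)
    simp only [scRho]; split_ifs <;> omega

theorem isPartition_scSigma (hρ : IsPartition ρ) (hσ : IsPartition σ) :
    IsPartition (scSigma ρ σ) := by
  intro i
  have := hρ i; have := hρ (i + 1); have := hσ i
  simp only [scSigma]; split_ifs <;> omega

theorem qs_scRho_scSigma (hρ : IsPartition ρ) (hσ : IsPartition σ) :
    QS (scRho ρ σ) (scSigma ρ σ) := by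
  intro i
  constructor
  · cases i with
    | zero =>
      have := hρ 0
      simp only [scRho, scSigma]; split_ifs <;> omega
    | succ i =>
      have := hρ (i + 1); have := hσ i
      simp only [scRho, scSigma]; split_ifs <;> omega
  · have := hρ i; have := hσ i
    simp only [scRho, scSigma]; split_ifs <;> omega

/-- The mass that `(ρ;σ)°` moves from `σ k` to `ρ k`. -/
def scGainRho (ρ σ : ℕ → ℕ) (k : ℕ) : ℕ :=
  if ρ k + 1 < σ k then (σ k - ρ k) / 2 else 0

/-- The mass that `(ρ;σ)°` moves from `ρ (k + 1)` to `σ k`. -/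
def scGainSigma (ρ σ : ℕ → ℕ) (k : ℕ) : ℕ :=
  if σ k < ρ (k + 1) then (ρ (k + 1) - σ k + 1) / 2 else 0

theorem scRho_zero : scRho ρ σ 0 = ρ 0 + scGainRho ρ σ 0 := by
  simp only [scRho, scGainRho]; split_ifs <;> omega

theorem scRho_succ_add_scGainSigma (hσ : IsPartition σ) (k : ℕ) :
    scRho ρ σ (k + 1) + scGainSigma ρ σ k = ρ (k + 1) + scGainRho ρ σ (k + 1) := by
  have := hσ k
  simp only [scRho, scGainRho, scGainSigma]; split_ifs <;> omega

theorem scSigma_add_scGainRho (hρ : IsPartition ρ) (k : ℕ) :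
    scSigma ρ σ k + scGainRho ρ σ k = σ k + scGainSigma ρ σ k := by
  have := hρ k
  simp only [scSigma, scGainRho, scGainSigma]; split_ifs <;> omega

theorem psum_interleave_sc (hρ : IsPartition ρ) (hσ : IsPartition σ) (k : ℕ) :
    psum (interleave (scRho ρ σ) (scSigma ρ σ)) (2 * k + 1) =
        psum (interleave ρ σ) (2 * k + 1) + scGainRho ρ σ k ∧
      psum (interleave (scRho ρ σ) (scSigma ρ σ)) (2 * k + 2) =
        psum (interleave ρ σ) (2 * k + 2) + scGainSigma ρ σ k := by
  have step (k : ℕ) (hodd : psum (interleave (scRho ρ σ) (scSigma ρ σ)) (2 * k + 1) =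
      psum (interleave ρ σ) (2 * k + 1) + scGainRho ρ σ k) :
      psum (interleave (scRho ρ σ) (scSigma ρ σ)) (2 * k + 2) =
        psum (interleave ρ σ) (2 * k + 2) + scGainSigma ρ σ k := by
    have := scSigma_add_scGainRho (σ := σ) hρ k
    rw [psum_interleave_two_mul_add_two, psum_interleave_two_mul_add_two, hodd]
    omega
  induction k with
  | zero =>
    have hodd : psum (interleave (scRho ρ σ) (scSigma ρ σ)) 1 =
        psum (interleave ρ σ) 1 + scGainRho ρ σ 0 := by
      simp [psum, interleave, scRho_zero]
    exact ⟨hodd, step 0 hodd⟩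
  | succ k ih =>
    have := scRho_succ_add_scGainSigma (ρ := ρ) hσ k
    have hodd : psum (interleave (scRho ρ σ) (scSigma ρ σ)) (2 * (k + 1) + 1) =
        psum (interleave ρ σ) (2 * (k + 1) + 1) + scGainRho ρ σ (k + 1) := by
      rw [psum_interleave_two_mul_add_one, psum_interleave_two_mul_add_one, Nat.mul_succ, ih.2]
      omega
    exact ⟨hodd, step (k + 1) hodd⟩

theorem QS.psum_two_mul_add_one {τ υ : ℕ → ℕ} (h : QS τ υ) (k : ℕ) :
    psum (interleave τ υ) (2 * k) + psum (interleave τ υ) (2 * k + 2) ≤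
      2 * psum (interleave τ υ) (2 * k + 1) + 1 := by
  have := (h k).1
  rw [psum_interleave_two_mul_add_two, psum_interleave_two_mul_add_one]
  omega

theorem QS.psum_two_mul_add_two {τ υ : ℕ → ℕ} (h : QS τ υ) (k : ℕ) :
    psum (interleave τ υ) (2 * k + 1) + psum (interleave τ υ) (2 * k + 3) ≤
      2 * psum (interleave τ υ) (2 * k + 2) := by
  have := (h k).2
  have : psum (interleave τ υ) (2 * k + 3) = psum (interleave τ υ) (2 * k + 2) + τ (k + 1) :=
    psum_interleave_two_mul_add_one τ υ (k + 1)
  rw [this, psum_interleave_two_mul_add_two]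
  omega

theorem biLE_sc (hρ : IsPartition ρ) (hσ : IsPartition σ) :
    BiLE ρ σ (scRho ρ σ) (scSigma ρ σ) :=
  forall_of_zero_of_odd_of_even le_rfl
    (fun k => (psum_interleave_sc hρ hσ k).1 ▸ Nat.le_add_right _ _)
    (fun k => (psum_interleave_sc hρ hσ k).2 ▸ Nat.le_add_right _ _)

theorem BiLE.sc_of_qs {τ υ : ℕ → ℕ} (hle : BiLE ρ σ τ υ) (hρ : IsPartition ρ)
    (hσ : IsPartition σ) (hτυ : QS τ υ) : BiLE (scRho ρ σ) (scSigma ρ σ) τ υ := by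
  refine forall_of_zero_of_odd_of_even le_rfl (fun k => ?_) (fun k => ?_)
  · have hT := hτυ.psum_two_mul_add_one k
    have := hle (2 * k); have := hle (2 * k + 1); have := hle (2 * k + 2)
    have := psum_interleave_two_mul_add_one ρ σ k
    have := psum_interleave_two_mul_add_two ρ σ k
    rw [(psum_interleave_sc hρ hσ k).1]
    simp only [scGainRho]; split_ifs <;> omega
  · have hT := hτυ.psum_two_mul_add_two k
    have := hle (2 * k + 1); have := hle (2 * k + 2); have := hle (2 * k + 3)
    have := psum_interleave_two_mul_add_two ρ σ k
    have : psum (interleave ρ σ) (2 * k + 3) = psum (interleave ρ σ) (2 * k + 2) + ρ (k + 1) :=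
      psum_interleave_two_mul_add_one ρ σ (k + 1)
    rw [(psum_interleave_sc hρ hσ k).2]
    simp only [scGainSigma]; split_ifs <;> omega

theorem interleave_sc_eq_zero {N j : ℕ} (h : ∀ i, N ≤ i → interleave ρ σ i = 0) (hj : N ≤ j) :
    interleave (scRho ρ σ) (scSigma ρ σ) j = 0 := by
  obtain ⟨i, rfl | rfl⟩ := Nat.even_or_odd' j
  · have hρi := h (2 * i) hj
    have hσi := h (2 * i + 1) (by omega)
    simp only [interleave_two_mul, interleave_two_mul_add_one] at hρi hσi ⊢
    cases i <;> simp only [scRho] <;> split_ifs <;> omega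
  · have hσi := h (2 * i + 1) hj
    have hρi := h (2 * (i + 1)) (by omega)
    simp only [interleave_two_mul, interleave_two_mul_add_one] at hρi hσi ⊢
    simp only [scSigma]; split_ifs <;> omega

theorem isComposition_sc {n : ℕ} (hρ : IsPartition ρ) (hσ : IsPartition σ)
    (hc : IsComposition n (interleave ρ σ)) :
    IsComposition n (interleave (scRho ρ σ) (scSigma ρ σ)) := by
  obtain ⟨N, hN, rfl⟩ := hc
  refine ⟨2 * N + 2, fun j hj => interleave_sc_eq_zero hN (by omega), ?_⟩
  have hgain : scGainSigma ρ σ N = 0 := by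
    have := hN (2 * (N + 1)) (by omega)
    simp_all [scGainSigma]
  rw [(psum_interleave_sc hρ hσ N).2, hgain, add_zero, psum_eq_of_forall_le_eq_zero hN (by omega)]

end

/-- `((ρ;σ)^C)^B = ((ρ;σ)^B)^C`, and the common value is the
special closure `(ρ;σ)°`, i.e. the minimum special bipartition dominating
`(ρ;σ)`. -/
theorem bC_eq_cB_eq_special (n : ℕ) (ρ σ : ℕ → ℕ) (h : IsBipartition n ρ σ) :
    (∀ i, bRho (cRho ρ σ) (cSigma ρ σ) i = cRho (bRho ρ σ) (bSigma ρ σ) i) ∧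
    (∀ i, bSigma (cRho ρ σ) (cSigma ρ σ) i = cSigma (bRho ρ σ) (bSigma ρ σ) i) ∧
    (IsBipartition n (bRho (cRho ρ σ) (cSigma ρ σ)) (bSigma (cRho ρ σ) (cSigma ρ σ)) ∧
     QS (bRho (cRho ρ σ) (cSigma ρ σ)) (bSigma (cRho ρ σ) (cSigma ρ σ)) ∧
     BiLE ρ σ (bRho (cRho ρ σ) (cSigma ρ σ)) (bSigma (cRho ρ σ) (cSigma ρ σ)) ∧
     (∀ τ υ : ℕ → ℕ, IsBipartition n τ υ → QS τ υ → BiLE ρ σ τ υ →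
        BiLE (bRho (cRho ρ σ) (cSigma ρ σ)) (bSigma (cRho ρ σ) (cSigma ρ σ)) τ υ)) := by
  obtain ⟨hρ, hσ, hc⟩ := h
  rw [bRho_cRho_cSigma hρ hσ, bSigma_cRho_cSigma hρ hσ, cRho_bRho_bSigma hρ hσ,
    cSigma_bRho_bSigma hρ hσ]
  exact ⟨fun _ => rfl, fun _ => rfl,
    ⟨isPartition_scRho hρ hσ, isPartition_scSigma hρ hσ, isComposition_sc hρ hσ hc⟩,
    qs_scRho_scSigma hρ hσ, biLE_sc hρ hσ, fun τ υ _ hτυ hle => hle.sc_of_qs hρ hσ hτυ⟩
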